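/- Let D be a finite multiset of points (b,d) in the plane with b < d, and let σ > 0. Then the L¹-norm of G_D(t) = Σ_{(b,d)∈D} Φ((t−b)/σ)·Φ((d−t)/σ) equals Σ_{(b,d)∈D} [(d−b)·Φ((d−b)/(√2σ)) + √2·σ·φ((d−b)/(√2σ))]. -/

import Mathlib

open MeasureTheory Real Filter

noncomputable def phi (t : ℝ) : ℝ := Real.exp (-t^2/2) / Real.sqrt (2*Real.pi)

noncomputable def Phi (x : ℝ) : ℝ := ∫ s in Set.Iic x, phi s

/-!
After the substitution `t = b + σ u` each summand becomes `F a = ∫ Φ(u) Φ(a - u) du` with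
`a = (d - b) / σ`, and it suffices to show `F a = a Φ(a/√2) + √2 φ(a/√2)`. Both sides tend to `0`
at `-∞`, so it is enough to compare derivatives. Differentiating under the integral sign gives
`F' = φ ⋆ Φ`; differentiating once more gives `(φ ⋆ Φ)' = φ ⋆ φ = φ(·/√2)/√2` (an explicit Gaussian
integral), so `φ ⋆ Φ = Φ(·/√2)`, which is also the derivative of the right-hand side.
-/

open ProbabilityTheory Topology

lemma phi_eq_gaussianPDFReal : phi = gaussianPDFReal 0 1 := by
  ext t
  simp [phi, gaussianPDFReal, div_eq_inv_mul]

lemma Phi_eq_cdf : Phi = cdf (gaussianReal 0 1) := by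
  ext x
  rw [cdf_eq_real, measureReal_def, gaussianReal_apply_eq_integral _ one_ne_zero,
    ENNReal.toReal_ofReal (setIntegral_nonneg measurableSet_Iic fun t _ ↦
      gaussianPDFReal_nonneg _ _ t), Phi, phi_eq_gaussianPDFReal]

lemma phi_nonneg (t : ℝ) : 0 ≤ phi t := by
  rw [phi_eq_gaussianPDFReal]; exact gaussianPDFReal_nonneg _ _ t

lemma phi_le_exp (t : ℝ) : phi t ≤ exp (-t ^ 2 / 2) := by
  have : 1 ≤ √(2 * π) := Real.one_le_sqrt.2 (by linarith [pi_gt_three])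
  exact div_le_self (exp_nonneg _) this

lemma phi_le_one (t : ℝ) : phi t ≤ 1 :=
  (phi_le_exp t).trans (exp_le_one_iff.2 (by nlinarith [sq_nonneg t]))

@[fun_prop]
lemma continuous_phi : Continuous phi := by
  unfold phi; fun_prop

lemma integrable_phi : Integrable phi := by
  rw [phi_eq_gaussianPDFReal]; exact integrable_gaussianPDFReal 0 1

lemma hasDerivAt_phi (x : ℝ) : HasDerivAt phi (-(x * phi x)) x := by
  have h : HasDerivAt (fun t : ℝ ↦ -t ^ 2 / 2) (-x) x :=
    ((hasDerivAt_pow 2 x).neg.div_const 2).congr_deriv (by norm_num; ring)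
  exact (h.exp.div_const √(2 * π)).congr_deriv (by rw [phi]; ring)

lemma tendsto_phi_atBot : Tendsto phi atBot (𝓝 0) := by
  have h : Tendsto (fun t : ℝ ↦ exp (-t ^ 2 / 2)) atBot (𝓝 0) := by
    refine tendsto_exp_comp_nhds_zero.2 ?_
    have := (tendsto_id.atBot_mul_atBot₀ tendsto_id).atTop_div_const (two_pos (α := ℝ))
    simpa [sq, neg_div] using this
  exact tendsto_of_tendsto_of_tendsto_of_le_of_le tendsto_const_nhds h phi_nonneg phi_le_exp

lemma Phi_nonneg (x : ℝ) : 0 ≤ Phi x := Phi_eq_cdf ▸ cdf_nonneg _ x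

lemma Phi_le_one (x : ℝ) : Phi x ≤ 1 := Phi_eq_cdf ▸ cdf_le_one _ x

lemma monotone_Phi : Monotone Phi := Phi_eq_cdf ▸ (cdf _).mono

lemma tendsto_Phi_atBot : Tendsto Phi atBot (𝓝 0) := Phi_eq_cdf ▸ tendsto_cdf_atBot _

lemma Phi_le_exp (x : ℝ) : Phi x ≤ exp (x + 1 / 2) := by
  have h := measure_le_le_exp_mul_mgf (μ := gaussianReal 0 1) (X := id) x (t := -1)
    (by norm_num) (integrable_exp_mul_gaussianReal (-1))
  rw [Phi_eq_cdf, cdf_eq_real]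
  simpa [mgf_id_gaussianReal, ← exp_add, Set.Iic] using h

lemma hasDerivAt_Phi (x : ℝ) : HasDerivAt Phi (phi x) x := by
  have h : ∀ y, Phi y = Phi 0 + ∫ t in (0 : ℝ)..y, phi t := fun y ↦ by
    rw [← intervalIntegral.integral_Iic_sub_Iic integrable_phi.integrableOn
      integrable_phi.integrableOn, Phi, Phi, add_sub_cancel]
  rw [funext h]
  exact (intervalIntegral.integral_hasDerivAt_right (continuous_phi.intervalIntegrable 0 x)
    continuous_phi.stronglyMeasurable.stronglyMeasurableAtFilter
    continuous_phi.continuousAt).const_add _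

@[fun_prop]
lemma continuous_Phi : Continuous Phi :=
  continuous_iff_continuousAt.2 fun x ↦ (hasDerivAt_Phi x).continuousAt

lemma integrable_exp_neg_abs : Integrable fun u : ℝ ↦ exp (-|u|) := by
  rw [← integrableOn_univ, ← Set.Iic_union_Ioi (a := (0 : ℝ)), integrableOn_union]
  refine ⟨(integrableOn_exp_Iic 0).congr_fun (fun u hu ↦ ?_) measurableSet_Iic,
    (exp_neg_integrableOn_Ioi 0 one_pos).congr_fun (fun u hu ↦ ?_) measurableSet_Ioi⟩
  · rw [abs_of_nonpos hu, neg_neg]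
  · simp [abs_of_pos (Set.mem_Ioi.1 hu)]

lemma Phi_mul_Phi_sub_le (a u : ℝ) :
    Phi u * Phi (a - u) ≤ exp (1 / 2) * (1 + exp a) * exp (-|u|) := by
  rcases le_total u 0 with hu | hu
  · calc Phi u * Phi (a - u) ≤ exp (u + 1 / 2) * 1 :=
          mul_le_mul (Phi_le_exp u) (Phi_le_one _) (Phi_nonneg _) (exp_nonneg _)
      _ ≤ exp (1 / 2) * (1 + exp a) * exp (-|u|) := by
          rw [abs_of_nonpos hu, neg_neg, mul_one, exp_add]
          nlinarith [exp_pos u, exp_pos (1 / 2), exp_pos a, mul_pos (exp_pos u) (exp_pos a)]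
  · calc Phi u * Phi (a - u) ≤ 1 * exp (a - u + 1 / 2) :=
          mul_le_mul (Phi_le_one u) (Phi_le_exp _) (Phi_nonneg _) zero_le_one
      _ ≤ exp (1 / 2) * (1 + exp a) * exp (-|u|) := by
          rw [abs_of_nonneg hu, one_mul, exp_add, sub_eq_add_neg, exp_add]
          nlinarith [exp_pos (-u), exp_pos (1 / 2), mul_pos (exp_pos (-u)) (exp_pos (1 / 2))]

lemma integrable_Phi_mul_Phi_sub (a : ℝ) : Integrable fun u ↦ Phi u * Phi (a - u) := by
  refine (integrable_exp_neg_abs.const_mul (exp (1 / 2) * (1 + exp a))).mono' (by fun_prop)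
    (ae_of_all _ fun u ↦ ?_)
  rw [Real.norm_of_nonneg (mul_nonneg (Phi_nonneg _) (Phi_nonneg _))]
  exact Phi_mul_Phi_sub_le a u

lemma phi_sub_le_of_abs_sub_lt {c x : ℝ} (hx : |x - c| < 1) (s : ℝ) :
    phi (x - s) ≤ exp (1 / 2) * exp (-(1 / 4) * (s - c) ^ 2) := by
  refine (phi_le_exp _).trans ?_
  rw [← exp_add, exp_le_exp]
  nlinarith [abs_lt.1 hx, sq_nonneg (s - c - 2 * (x - c))]

section IntegralMulPhiSub

variable {f : ℝ → ℝ}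

lemma hasDerivAt_integral_mul_Phi_sub (hf : Continuous f) (hf1 : ∀ s, |f s| ≤ 1) {c : ℝ}
    (hint : Integrable fun s ↦ f s * Phi (c - s)) :
    HasDerivAt (fun x ↦ ∫ s, f s * Phi (x - s)) (∫ s, f s * phi (c - s)) c := by
  have hbound : Integrable fun s ↦ exp (1 / 2) * exp (-(1 / 4) * (s - c) ^ 2) :=
    ((integrable_exp_neg_mul_sq (by norm_num)).comp_sub_right c).const_mul _
  refine (hasDerivAt_integral_of_dominated_loc_of_deriv_le
    (F := fun x s ↦ f s * Phi (x - s)) (F' := fun x s ↦ f s * phi (x - s))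
    (Metric.ball_mem_nhds c one_pos)
    (Eventually.of_forall fun x ↦ by fun_prop) hint (by fun_prop)
    (ae_of_all _ fun s x hx ↦ ?_) hbound (ae_of_all _ fun s x _ ↦ ?_)).2
  · rw [norm_mul, Real.norm_of_nonneg (phi_nonneg _)]
    exact (mul_le_of_le_one_left (phi_nonneg _) (hf1 s)).trans
      (phi_sub_le_of_abs_sub_lt (by simpa [Real.dist_eq] using hx) s)
  · simpa using ((hasDerivAt_Phi (x - s)).comp x ((hasDerivAt_id x).sub_const s)).const_mul (f s)

lemma tendsto_integral_mul_Phi_sub_atBot (hf : Continuous f) (hf0 : ∀ s, 0 ≤ f s) {c : ℝ}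
    (hint : Integrable fun s ↦ f s * Phi (c - s)) :
    Tendsto (fun x ↦ ∫ s, f s * Phi (x - s)) atBot (𝓝 0) := by
  rw [← integral_zero ℝ ℝ]
  refine tendsto_integral_filter_of_dominated_convergence _ (Eventually.of_forall fun x ↦
    by fun_prop) ?_ hint (ae_of_all _ fun s ↦ ?_)
  · filter_upwards [eventually_le_atBot c] with x hx
    refine ae_of_all _ fun s ↦ ?_
    rw [Real.norm_of_nonneg (mul_nonneg (hf0 s) (Phi_nonneg _))]
    exact mul_le_mul_of_nonneg_left (monotone_Phi (by linarith)) (hf0 s)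
  · have hshift := tendsto_atBot_add_const_right atBot (-s) tendsto_id
    simpa [sub_eq_add_neg] using (tendsto_Phi_atBot.comp hshift).const_mul (f s)

end IntegralMulPhiSub

lemma eq_of_hasDerivAt_of_tendsto_atBot {f g f' : ℝ → ℝ} {l : ℝ}
    (hf : ∀ x, HasDerivAt f (f' x) x) (hg : ∀ x, HasDerivAt g (f' x) x)
    (hfl : Tendsto f atBot (𝓝 l)) (hgl : Tendsto g atBot (𝓝 l)) : f = g := by
  have hconst : ∀ x y, f x - g x = f y - g y := is_const_of_deriv_eq_zero
    (fun x ↦ ((hf x).sub (hg x)).differentiableAt)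
    (fun x ↦ ((hf x).sub (hg x)).deriv.trans (sub_self _))
  ext x
  have hlim : Tendsto (fun y ↦ f y - g y) atBot (𝓝 0) := by simpa using hfl.sub hgl
  rw [funext fun y ↦ hconst y x] at hlim
  exact sub_eq_zero.1 (tendsto_nhds_unique tendsto_const_nhds hlim)

lemma integral_phi_mul_phi_sub (c : ℝ) :
    ∫ s, phi s * phi (c - s) = phi (c / √2) / √2 := by
  have hsq : (fun s ↦ phi s * phi (c - s))
      = fun s ↦ exp (-c ^ 2 / 4) / (2 * π) * exp (-1 * (s - c / 2) ^ 2) := by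
    ext s
    simp only [phi]
    rw [div_mul_div_comm, Real.mul_self_sqrt (by positivity), ← exp_add,
      div_mul_eq_mul_div, ← exp_add]
    ring_nf
  rw [hsq, integral_const_mul, integral_sub_right_eq_self (fun s ↦ exp (-1 * s ^ 2)),
    integral_gaussian, phi, div_pow, Real.sq_sqrt zero_le_two, Real.sqrt_mul zero_le_two]
  field_simp
  rw [Real.sq_sqrt pi_pos.le, Real.sq_sqrt zero_le_two]
  ring_nf

lemma integrable_phi_mul_Phi_sub (c : ℝ) : Integrable fun s ↦ phi s * Phi (c - s) :=
  integrable_phi.mul_bdd (c := 1) (by fun_prop) (ae_of_all _ fun s ↦ by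
    rw [Real.norm_of_nonneg (Phi_nonneg _)]; exact Phi_le_one _)

lemma hasDerivAt_Phi_div_sqrt_two (x : ℝ) :
    HasDerivAt (fun y ↦ Phi (y / √2)) (phi (x / √2) / √2) x := by
  have hlin : HasDerivAt (fun y : ℝ ↦ y / √2) (1 / √2) x := (hasDerivAt_id x).div_const √2
  exact ((hasDerivAt_Phi (x / √2)).comp x hlin).congr_deriv (mul_one_div _ _)

lemma integral_phi_mul_Phi_sub (c : ℝ) : ∫ s, phi s * Phi (c - s) = Phi (c / √2) := by
  refine congrFun (eq_of_hasDerivAt_of_tendsto_atBot (fun x ↦ ?_) hasDerivAt_Phi_div_sqrt_two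
    (tendsto_integral_mul_Phi_sub_atBot continuous_phi phi_nonneg
      (integrable_phi_mul_Phi_sub 0)) ?_) c
  · rw [← integral_phi_mul_phi_sub]
    exact hasDerivAt_integral_mul_Phi_sub continuous_phi
      (fun s ↦ by rw [abs_of_nonneg (phi_nonneg s)]; exact phi_le_one s)
      (integrable_phi_mul_Phi_sub x)
  · exact tendsto_Phi_atBot.comp (tendsto_id.atBot_div_const (by positivity))

lemma hasDerivAt_mul_Phi_add_phi (x : ℝ) :
    HasDerivAt (fun y ↦ y * Phi y + phi y) (Phi x) x :=
  (((hasDerivAt_id x).mul (hasDerivAt_Phi x)).add (hasDerivAt_phi x)).congr_deriv (by simp)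

lemma tendsto_mul_exp_atBot : Tendsto (fun x ↦ x * exp x) atBot (𝓝 0) := by
  simpa using ((tendsto_pow_mul_exp_neg_atTop_nhds_zero 1).comp tendsto_neg_atBot_atTop).neg

lemma tendsto_mul_Phi_atBot : Tendsto (fun x ↦ x * Phi x) atBot (𝓝 0) := by
  have hlow : Tendsto (fun x ↦ exp (1 / 2) * (x * exp x)) atBot (𝓝 0) := by
    simpa using tendsto_mul_exp_atBot.const_mul (exp (1 / 2))
  refine tendsto_of_tendsto_of_tendsto_of_le_of_le' hlow tendsto_const_nhds ?_ ?_ <;>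
    filter_upwards [eventually_le_atBot 0] with x hx
  · calc exp (1 / 2) * (x * exp x) = x * exp (x + 1 / 2) := by rw [exp_add]; ring
      _ ≤ x * Phi x := mul_le_mul_of_nonpos_left (Phi_le_exp x) hx
  · exact mul_nonpos_of_nonpos_of_nonneg hx (Phi_nonneg x)

lemma tendsto_mul_Phi_add_phi_atBot : Tendsto (fun x ↦ x * Phi x + phi x) atBot (𝓝 0) := by
  simpa using tendsto_mul_Phi_atBot.add tendsto_phi_atBot

lemma integral_Phi_mul_Phi_sub (a : ℝ) :
    ∫ u, Phi u * Phi (a - u) = a * Phi (a / √2) + √2 * phi (a / √2) := by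
  have hg : ∀ x, HasDerivAt (fun y ↦ √2 * (y / √2 * Phi (y / √2) + phi (y / √2)))
      (Phi (x / √2)) x := fun x ↦ by
    have hlin : HasDerivAt (fun y : ℝ ↦ y / √2) (1 / √2) x := (hasDerivAt_id x).div_const √2
    exact (((hasDerivAt_mul_Phi_add_phi (x / √2)).comp x hlin).const_mul √2).congr_deriv
      (by rw [mul_one_div, mul_div_cancel₀ _ (by positivity)])
  have hF : ∀ x, HasDerivAt (fun y ↦ ∫ u, Phi u * Phi (y - u)) (Phi (x / √2)) x := fun x ↦ by
    have hswap : ∫ u, Phi u * phi (x - u) = ∫ s, phi s * Phi (x - s) := by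
      rw [← integral_sub_left_eq_self _ volume x]
      simp_rw [sub_sub_cancel, mul_comm]
    rw [← integral_phi_mul_Phi_sub, ← hswap]
    exact hasDerivAt_integral_mul_Phi_sub continuous_Phi
      (fun u ↦ by rw [abs_of_nonneg (Phi_nonneg u)]; exact Phi_le_one u)
      (integrable_Phi_mul_Phi_sub x)
  have hlim : Tendsto (fun y ↦ √2 * (y / √2 * Phi (y / √2) + phi (y / √2))) atBot (𝓝 0) := by
    simpa using (tendsto_mul_Phi_add_phi_atBot.comp
      (tendsto_id.atBot_div_const (by positivity))).const_mul √2
  rw [congrFun (eq_of_hasDerivAt_of_tendsto_atBot hF hg (tendsto_integral_mul_Phi_sub_atBot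
    continuous_Phi Phi_nonneg (integrable_Phi_mul_Phi_sub 0)) hlim) a]
  field_simp

lemma Phi_mul_Phi_scaled_eq {σ : ℝ} (hσ : σ ≠ 0) (b d t : ℝ) :
    Phi ((t - b) / σ) * Phi ((d - t) / σ)
      = Phi ((t - b) / σ) * Phi ((d - b) / σ - (t - b) / σ) := by
  congr 2; field_simp; ring

lemma integrable_Phi_mul_Phi_scaled {σ : ℝ} (hσ : σ ≠ 0) (b d : ℝ) :
    Integrable fun t ↦ Phi ((t - b) / σ) * Phi ((d - t) / σ) := by
  simp_rw [Phi_mul_Phi_scaled_eq hσ]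
  exact ((integrable_Phi_mul_Phi_sub _).comp_div hσ).comp_sub_right b

lemma integral_Phi_mul_Phi_scaled {σ : ℝ} (hσ : 0 < σ) (b d : ℝ) :
    ∫ t, Phi ((t - b) / σ) * Phi ((d - t) / σ)
      = (d - b) * Phi ((d - b) / (√2 * σ)) + √2 * σ * phi ((d - b) / (√2 * σ)) := by
  set g := fun u ↦ Phi u * Phi ((d - b) / σ - u)
  have hshift := integral_sub_right_eq_self (μ := volume) (fun t ↦ g (t / σ)) b
  simp_rw [Phi_mul_Phi_scaled_eq hσ.ne']
  rw [hshift, Measure.integral_comp_div g, abs_of_pos hσ, smul_eq_mul, integral_Phi_mul_Phi_sub,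
    div_div, mul_comm σ √2]
  field_simp

section MultisetSum

variable {ι : Type*} {f : ι → ℝ → ℝ}

lemma integrable_multiset_sum_map (D : Multiset ι) (hf : ∀ i ∈ D, Integrable (f i)) :
    Integrable fun t ↦ (D.map fun i ↦ f i t).sum := by
  induction D using Multiset.induction_on with
  | empty => simp
  | cons i D ih =>
    simp only [Multiset.map_cons, Multiset.sum_cons]
    exact (hf i (Multiset.mem_cons_self i D)).add
      (ih fun j hj ↦ hf j (Multiset.mem_cons_of_mem hj))

lemma integral_multiset_sum_map (D : Multiset ι) (hf : ∀ i ∈ D, Integrable (f i)) :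
    ∫ t, (D.map fun i ↦ f i t).sum = (D.map fun i ↦ ∫ t, f i t).sum := by
  induction D using Multiset.induction_on with
  | empty => simp
  | cons i D ih =>
    have hD : ∀ j ∈ D, Integrable (f j) := fun j hj ↦ hf j (Multiset.mem_cons_of_mem hj)
    simp only [Multiset.map_cons, Multiset.sum_cons]
    rw [integral_add (hf i (Multiset.mem_cons_self i D)) (integrable_multiset_sum_map D hD),
      ih hD]

end MultisetSum

theorem stmt9_general (D : Multiset (ℝ × ℝ)) (σ : ℝ) (hσ : 0 < σ) :
    ∫ t : ℝ, |(D.map (fun p => Phi ((t - p.1) / σ) * Phi ((p.2 - t) / σ))).sum| =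
      (D.map (fun p => (p.2 - p.1) * Phi ((p.2 - p.1) / (Real.sqrt 2 * σ)) +
        Real.sqrt 2 * σ * phi ((p.2 - p.1) / (Real.sqrt 2 * σ)))).sum := by
  have hnonneg : ∀ t, 0 ≤ (D.map fun p ↦ Phi ((t - p.1) / σ) * Phi ((p.2 - t) / σ)).sum :=
    fun t ↦ Multiset.sum_nonneg fun _ hx ↦ by
      obtain ⟨p, -, rfl⟩ := Multiset.mem_map.1 hx
      exact mul_nonneg (Phi_nonneg _) (Phi_nonneg _)
  simp_rw [abs_of_nonneg (hnonneg _)]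
  rw [integral_multiset_sum_map D fun p _ ↦ integrable_Phi_mul_Phi_scaled hσ.ne' p.1 p.2]
  simp_rw [integral_Phi_mul_Phi_scaled hσ]

theorem stmt9 (D : Multiset (ℝ × ℝ)) (hD : ∀ p ∈ D, p.1 < p.2) (σ : ℝ) (hσ : 0 < σ) :
    ∫ t : ℝ, |(D.map (fun p => Phi ((t - p.1) / σ) * Phi ((p.2 - t) / σ))).sum| =
      (D.map (fun p => (p.2 - p.1) * Phi ((p.2 - p.1) / (Real.sqrt 2 * σ)) +
        Real.sqrt 2 * σ * phi ((p.2 - p.1) / (Real.sqrt 2 * σ)))).sum :=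
  stmt9_general D σ hσ
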